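/- arXiv:1208.3817 — 3 statements merged into one kernel-verified Lean document; each statement's English description precedes it below -/
import Mathlib

section
/- With f_{+-}(μ) = (1/√(2π)) e^{iπ/4 + μπ/2} Γ(1/2 - iμ) and f_{-+}(μ) = (1/√(2π)) e^{iπ/4 - μπ/2} Γ(1/2 + iμ), for all real μ one has |f_{+-}(μ)|² + |f_{-+}(μ)|² = 1. -/
open Real Complex

/-- `f_{+-}(μ) = (1/√(2π)) e^{iπ/4 + μπ/2} Γ(1/2 - iμ)` -/
noncomputable def fPlusMinus (μ : ℝ) : ℂ :=
  (1 / Real.sqrt (2 * Real.pi) : ℝ) *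
    Complex.exp ((Real.pi : ℂ) / 4 * Complex.I + (μ : ℂ) * Real.pi / 2) *
    Complex.Gamma (1 / 2 - (μ : ℂ) * Complex.I)

/-- `f_{-+}(μ) = (1/√(2π)) e^{iπ/4 - μπ/2} Γ(1/2 + iμ)` -/
noncomputable def fMinusPlus (μ : ℝ) : ℂ :=
  (1 / Real.sqrt (2 * Real.pi) : ℝ) *
    Complex.exp ((Real.pi : ℂ) / 4 * Complex.I - (μ : ℂ) * Real.pi / 2) *
    Complex.Gamma (1 / 2 + (μ : ℂ) * Complex.I)

/-! On the line `Re s = 1/2` we have `conj s = 1 - s`, so the reflection formula gives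
`|Γ(1/2 + it)|² = π / cosh (π t)`. The exponential prefactors contribute `e^{± π μ} / (2π)`,
and the two terms add up to `(e^{π μ} + e^{-π μ}) / (2 cosh (π μ)) = 1`. -/

namespace Complex

open ComplexConjugate

lemma sin_pi_mul_one_half_add_mul_I (t : ℝ) :
    sin (π * (1 / 2 + t * I)) = Real.cosh (π * t) := by
  rw [show (π : ℂ) * (1 / 2 + t * I) = π * t * I + π / 2 by ring, sin_add_pi_div_two, cos_mul_I]
  push_cast
  rfl

lemma Gamma_one_half_add_mul_I_mul_Gamma_one_half_sub_mul_I (t : ℝ) :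
    Gamma (1 / 2 + t * I) * Gamma (1 / 2 - t * I) = π / Real.cosh (π * t) := by
  rw [show (1 / 2 - t * I : ℂ) = 1 - (1 / 2 + t * I) by ring, Gamma_mul_Gamma_one_sub,
    sin_pi_mul_one_half_add_mul_I]

lemma norm_Gamma_one_half_add_mul_I_sq (t : ℝ) :
    ‖Gamma (1 / 2 + t * I)‖ ^ 2 = π / Real.cosh (π * t) := by
  have hconj : conj (1 / 2 + t * I : ℂ) = 1 / 2 - t * I := by simp [Complex.ext_iff]
  apply ofReal_injective
  push_cast
  rw [← mul_conj', ← Gamma_conj, hconj, Gamma_one_half_add_mul_I_mul_Gamma_one_half_sub_mul_I]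
  push_cast
  rfl

lemma norm_Gamma_one_half_sub_mul_I_sq (t : ℝ) :
    ‖Gamma (1 / 2 - t * I)‖ ^ 2 = π / Real.cosh (π * t) := by
  simpa [sub_eq_add_neg, Real.cosh_neg] using norm_Gamma_one_half_add_mul_I_sq (-t)

end Complex

lemma norm_fPlusMinus_sq (μ : ℝ) :
    ‖fPlusMinus μ‖ ^ 2 = Real.exp (π * μ) / (2 * Real.cosh (π * μ)) := by
  have hre : ((π : ℂ) / 4 * I + μ * π / 2).re = μ * π / 2 := by simp
  rw [fPlusMinus, norm_mul, norm_mul, mul_pow, mul_pow, norm_real, Real.norm_eq_abs, sq_abs,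
    div_pow, Real.sq_sqrt (by positivity), norm_exp, hre, ← Real.exp_nat_mul,
    norm_Gamma_one_half_sub_mul_I_sq]
  field_simp
  ring_nf

lemma norm_fMinusPlus_sq (μ : ℝ) :
    ‖fMinusPlus μ‖ ^ 2 = Real.exp (-(π * μ)) / (2 * Real.cosh (π * μ)) := by
  have hre : ((π : ℂ) / 4 * I - μ * π / 2).re = -(μ * π / 2) := by simp
  rw [fMinusPlus, norm_mul, norm_mul, mul_pow, mul_pow, norm_real, Real.norm_eq_abs, sq_abs,
    div_pow, Real.sq_sqrt (by positivity), norm_exp, hre, ← Real.exp_nat_mul,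
    norm_Gamma_one_half_add_mul_I_sq]
  field_simp
  ring_nf

theorem sq_abs_fPlusMinus_add_sq_abs_fMinusPlus (μ : ℝ) :
    ‖fPlusMinus μ‖ ^ 2 + ‖fMinusPlus μ‖ ^ 2 = 1 := by
  rw [norm_fPlusMinus_sq, norm_fMinusPlus_sq, ← add_div, div_eq_one_iff_eq (by positivity),
    Real.cosh_eq]
  ring
end

section
/- With f_{+-}, f_{-+} as above, for all μ ≥ 0 one has |f_{+-}(μ)| + |f_{-+}(μ)| = √(1 + 1/cosh(πμ)), and consequently 1 ≤ |f_{+-}(μ)| + |f_{-+}(μ)| ≤ √2. -/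
open Real Complex

/-!
Euler's reflection formula together with `Γ(conj s) = conj (Γ s)` gives
`|Γ(1/2 + iμ)|² = π / sin(π(1/2 + iμ)) = π / cosh(πμ)`, and `Γ(1/2 - iμ)` has the same modulus.
Hence `|f₊₋(μ)| + |f₋₊(μ)| = 2 cosh(πμ/2) |Γ(1/2 + iμ)| / √(2π)`, whose square is
`(1 + cosh(πμ)) / cosh(πμ)` by the double-angle formula; the bounds follow from `1 ≤ cosh`.
-/

open ComplexConjugate

lemma Complex.Gamma_one_half_sub_mul_I_eq_conj (t : ℝ) :
    Gamma (1 / 2 - t * I) = conj (Gamma (1 / 2 + t * I)) := by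
  rw [← Gamma_conj]
  congr 1
  simp [Complex.ext_iff]

lemma Complex.norm_Gamma_one_half_add_mul_I_sq_s3 (t : ℝ) :
    ‖Gamma (1 / 2 + t * I)‖ ^ 2 = π / Real.cosh (π * t) := by
  have hsin : sin (π * (1 / 2 + t * I)) = Real.cosh (π * t) := by
    rw [show (π : ℂ) * (1 / 2 + t * I) = π / 2 + (π * t : ℝ) * I by push_cast; ring,
      sin_add_mul_I, sin_pi_div_two, cos_pi_div_two, ofReal_cosh]
    ring
  have reflection := Gamma_mul_Gamma_one_sub (1 / 2 + t * I)
  rw [show 1 - (1 / 2 + t * I) = 1 / 2 - t * I by ring, Gamma_one_half_sub_mul_I_eq_conj,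
    mul_conj, hsin, ← ofReal_div] at reflection
  rw [← normSq_eq_norm_sq]
  exact_mod_cast reflection

lemma norm_fPlusMinus (μ : ℝ) :
    ‖fPlusMinus μ‖ = Real.exp (μ * π / 2) * ‖Gamma (1 / 2 + μ * I)‖ / √(2 * π) := by
  rw [fPlusMinus, Gamma_one_half_sub_mul_I_eq_conj, norm_mul, norm_mul, norm_conj, norm_exp,
    Complex.norm_of_nonneg (by positivity)]
  have hre : ((π : ℂ) / 4 * I + μ * π / 2).re = μ * π / 2 := by simp
  rw [hre]
  ring

lemma norm_fMinusPlus (μ : ℝ) :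
    ‖fMinusPlus μ‖ = Real.exp (-(μ * π / 2)) * ‖Gamma (1 / 2 + μ * I)‖ / √(2 * π) := by
  rw [fMinusPlus, norm_mul, norm_mul, norm_exp, Complex.norm_of_nonneg (by positivity)]
  have hre : ((π : ℂ) / 4 * I - μ * π / 2).re = -(μ * π / 2) := by simp
  rw [hre]
  ring

lemma norm_fPlusMinus_add_norm_fMinusPlus (μ : ℝ) :
    ‖fPlusMinus μ‖ + ‖fMinusPlus μ‖ = √(1 + 1 / Real.cosh (π * μ)) := by
  have hsum : ‖fPlusMinus μ‖ + ‖fMinusPlus μ‖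
      = 2 * Real.cosh (μ * π / 2) * ‖Gamma (1 / 2 + μ * I)‖ / √(2 * π) := by
    rw [norm_fPlusMinus, norm_fMinusPlus, Real.cosh_eq]
    ring
  have hcosh : (2 * Real.cosh (μ * π / 2)) ^ 2 = 2 * (Real.cosh (π * μ) + 1) := by
    have h := Real.cosh_two_mul (μ * π / 2)
    rw [Real.sinh_sq, show 2 * (μ * π / 2) = π * μ by ring] at h
    linear_combination -2 * h
  have := Real.cosh_pos (π * μ)
  rw [hsum, eq_comm, Real.sqrt_eq_iff_eq_sq (by positivity) (by positivity), div_pow, mul_pow,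
    hcosh, norm_Gamma_one_half_add_mul_I_sq_s3, Real.sq_sqrt (by positivity)]
  field_simp

lemma one_le_sqrt_one_add_one_div_cosh (x : ℝ) : 1 ≤ √(1 + 1 / Real.cosh x) :=
  Real.one_le_sqrt.mpr (le_add_of_nonneg_right (by positivity))

lemma sqrt_one_add_one_div_cosh_le_sqrt_two (x : ℝ) : √(1 + 1 / Real.cosh x) ≤ √2 := by
  gcongr
  have := (div_le_one (Real.cosh_pos x)).mpr (Real.one_le_cosh x)
  linarith

theorem abs_fPlusMinus_add_abs_fMinusPlus_general (μ : ℝ) :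
    ‖fPlusMinus μ‖ + ‖fMinusPlus μ‖ =
      Real.sqrt (1 + 1 / Real.cosh (Real.pi * μ)) ∧
    1 ≤ ‖fPlusMinus μ‖ + ‖fMinusPlus μ‖ ∧
    ‖fPlusMinus μ‖ + ‖fMinusPlus μ‖ ≤ Real.sqrt 2 := by
  rw [norm_fPlusMinus_add_norm_fMinusPlus]
  exact ⟨rfl, one_le_sqrt_one_add_one_div_cosh _, sqrt_one_add_one_div_cosh_le_sqrt_two _⟩

theorem abs_fPlusMinus_add_abs_fMinusPlus (μ : ℝ) (hμ : 0 ≤ μ) :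
    ‖fPlusMinus μ‖ + ‖fMinusPlus μ‖ =
      Real.sqrt (1 + 1 / Real.cosh (Real.pi * μ)) ∧
    1 ≤ ‖fPlusMinus μ‖ + ‖fMinusPlus μ‖ ∧
    ‖fPlusMinus μ‖ + ‖fMinusPlus μ‖ ≤ Real.sqrt 2 :=
  abs_fPlusMinus_add_abs_fMinusPlus_general μ
end

section
/- Let λ ∈ ℂ. Every solution x of the differential equation −(d/dt)(t² x'(t)) = λ x(t) on (0,∞) that belongs to L²((0,∞)) is identically zero. Equivalently: for λ ≠ 1/4 the general solution is c₁ t^{a₁} + c₂ t^{a₂} with a_{1,2} = −1/2 ± √(1/4 − λ), and for λ = 1/4 it is c₁ t^{−1/2} + c₂ t^{−1/2} ln t; no nonzero such function is square-integrable on (0,∞). -/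
/-!
In the variable `u = log t` the map `f ↦ e^{u/2} f(e^u)` is an isometry from `L²(0, ∞)` onto
`L²(ℝ)`; it sends `t^{-1/2 + a}` to `e^{a u}` and `t^{-1/2} log t` to `u`. So it suffices that
`c₁ e^{s₁ u} + c₂ e^{s₂ u}` with `s₁ ≠ s₂`, and `c₁ + c₂ u`, lie in `L²(ℝ)` only when
`c₁ = c₂ = 0`. Since `L²(ℝ)` is translation invariant, subtracting a suitable multiple of a
translate removes one of the two terms and leaves `c e^{s u}` (resp. the constant `c₂`), whose
modulus is at least `‖c‖` on a half-line, a set of infinite measure.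
-/

open MeasureTheory Set
open scoped ENNReal Complex

lemma MeasureTheory.not_memLp_of_ae_le_norm {α E : Type*} [MeasurableSpace α] {μ : Measure α}
    [NormedAddCommGroup E] {p : ℝ≥0∞} (hp₀ : p ≠ 0) (hp : p ≠ ∞) (hμ : μ univ = ∞) {f : α → E}
    {c : ℝ} (hc : 0 < c) (hf : ∀ᵐ x ∂μ, c ≤ ‖f x‖) : ¬ MemLp f p μ := by
  intro hmem
  have hconst : MemLp (fun _ ↦ c) p μ :=
    hmem.of_le aestronglyMeasurable_const (hf.mono fun x hx ↦ by rwa [Real.norm_of_nonneg hc.le])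
  simp [memLp_const_iff hp₀ hp, hc.ne', hμ] at hconst

lemma MeasureTheory.MemLp.exp_half_smul_comp_exp {E : Type*} [NormedAddCommGroup E]
    [NormedSpace ℝ E] {f g : ℝ → E} (hf : MemLp f 2 (volume.restrict (Ioi 0)))
    (hg : AEStronglyMeasurable g) (hfg : ∀ u, g u = Real.exp (u / 2) • f (Real.exp u)) :
    MemLp g 2 volume := by
  have hf' : IntegrableOn (fun t ↦ ‖f t‖ ^ 2) (Real.exp '' univ) := by
    rw [image_univ, Real.range_exp]
    exact (memLp_two_iff_integrable_sq_norm hf.1).1 hf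
  rw [integrableOn_image_iff_integrableOn_abs_deriv_smul MeasurableSet.univ
    (fun u _ ↦ (Real.hasDerivAt_exp u).hasDerivWithinAt) Real.exp_injective.injOn,
    integrableOn_univ] at hf'
  rw [memLp_two_iff_integrable_sq_norm hg]
  refine hf'.congr (ae_of_all _ fun u ↦ ?_)
  dsimp only
  rw [hfg, norm_smul, mul_pow, Real.norm_of_nonneg (Real.exp_pos _).le, ← Real.exp_nat_mul,
    abs_of_pos (Real.exp_pos u), smul_eq_mul, Nat.cast_ofNat, mul_div_cancel₀ u two_ne_zero]

lemma exp_half_smul_cpow_exp (a : ℂ) (u : ℝ) :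
    Real.exp (u / 2) • (Real.exp u : ℂ) ^ a = cexp ((a + 1 / 2) * u) := by
  rw [Complex.cpow_def_of_ne_zero (by exact_mod_cast (Real.exp_pos u).ne'),
    ← Complex.ofReal_log (Real.exp_pos u).le, Real.log_exp, Complex.real_smul,
    Complex.ofReal_exp, ← Complex.exp_add]
  push_cast
  ring_nf

lemma exists_cexp_mul_ofReal_ne_one {z : ℂ} (hz : z ≠ 0) : ∃ τ : ℝ, cexp (z * τ) ≠ 1 := by
  by_contra! h
  obtain ⟨n, hn⟩ := Complex.exp_eq_one_iff.1 (by simpa using h 1)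
  have hn₀ : (n : ℂ) ≠ 0 := by rintro h₀; simp [h₀, hz] at hn
  refine absurd (h (1 / (2 * n))) ?_
  rw [hn, show (n * (2 * Real.pi * Complex.I) * ((1 / (2 * n) : ℝ) : ℂ)) = Real.pi * Complex.I by
    push_cast; field_simp, Complex.exp_pi_mul_I]
  norm_num

section LpOnReal

variable {p : ℝ≥0∞}

lemma eq_zero_of_memLp_const (hp₀ : p ≠ 0) (hp : p ≠ ∞) {E : Type*} [NormedAddCommGroup E]
    {c : E} (h : MemLp (fun _ : ℝ ↦ c) p volume) : c = 0 :=
  ((memLp_const_iff hp₀ hp).1 h).resolve_right (by simp)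

lemma eq_zero_of_memLp_const_mul_cexp (hp₀ : p ≠ 0) (hp : p ≠ ∞) {c s : ℂ}
    (h : MemLp (fun u : ℝ ↦ c * cexp (s * u)) p volume) : c = 0 := by
  by_contra hc
  have hnorm (u : ℝ) : ‖c * cexp (s * u)‖ = ‖c‖ * Real.exp (s.re * u) := by
    simp [Complex.norm_exp]
  rcases le_total 0 s.re with hs | hs
  · refine not_memLp_of_ae_le_norm hp₀ hp (by simp) (norm_pos_iff.2 hc) ?_ (h.restrict (Ioi 0))
    refine ae_restrict_of_forall_mem measurableSet_Ioi fun u (hu : 0 < u) ↦ ?_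
    rw [hnorm]
    exact le_mul_of_one_le_right (norm_nonneg _) (Real.one_le_exp (by positivity))
  · refine not_memLp_of_ae_le_norm hp₀ hp (by simp) (norm_pos_iff.2 hc) ?_ (h.restrict (Iio 0))
    refine ae_restrict_of_forall_mem measurableSet_Iio fun u (hu : u < 0) ↦ ?_
    rw [hnorm]
    exact le_mul_of_one_le_right (norm_nonneg _) (Real.one_le_exp (by nlinarith))

lemma eq_zero_of_memLp_cexp_add_cexp_left (hp₀ : p ≠ 0) (hp : p ≠ ∞) {s₁ s₂ : ℂ} (hs : s₁ ≠ s₂)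
    {c₁ c₂ : ℂ} (h : MemLp (fun u : ℝ ↦ c₁ * cexp (s₁ * u) + c₂ * cexp (s₂ * u)) p volume) :
    c₁ = 0 := by
  obtain ⟨τ, hτ⟩ := exists_cexp_mul_ofReal_ne_one (sub_ne_zero.2 hs)
  have hshift : MemLp (fun u : ℝ ↦
      c₁ * (cexp (s₁ * τ) - cexp (s₂ * τ)) * cexp (s₁ * u)) p volume := by
    convert (h.comp_measurePreserving (measurePreserving_add_right volume τ)).sub
      (h.const_mul (cexp (s₂ * τ))) using 1
    funext u
    simp only [Function.comp, Pi.sub_apply, Complex.ofReal_add, mul_add, Complex.exp_add]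
    ring
  have hne : cexp (s₁ * τ) - cexp (s₂ * τ) ≠ 0 := by
    rw [sub_ne_zero]
    contrapose! hτ
    rw [sub_mul, Complex.exp_sub, hτ, div_self (Complex.exp_ne_zero _)]
  exact (mul_eq_zero.1 (eq_zero_of_memLp_const_mul_cexp hp₀ hp hshift)).resolve_right hne

lemma eq_zero_of_memLp_cexp_add_cexp (hp₀ : p ≠ 0) (hp : p ≠ ∞) {s₁ s₂ : ℂ} (hs : s₁ ≠ s₂)
    {c₁ c₂ : ℂ} (h : MemLp (fun u : ℝ ↦ c₁ * cexp (s₁ * u) + c₂ * cexp (s₂ * u)) p volume) :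
    c₁ = 0 ∧ c₂ = 0 :=
  ⟨eq_zero_of_memLp_cexp_add_cexp_left hp₀ hp hs h,
    eq_zero_of_memLp_cexp_add_cexp_left hp₀ hp hs.symm (c₂ := c₁)
      (by simpa only [add_comm] using h)⟩

lemma eq_zero_of_memLp_const_add_mul (hp₀ : p ≠ 0) (hp : p ≠ ∞) {c₁ c₂ : ℂ}
    (h : MemLp (fun u : ℝ ↦ c₁ + c₂ * u) p volume) : c₁ = 0 ∧ c₂ = 0 := by
  have hc₂ : c₂ = 0 := by
    refine eq_zero_of_memLp_const hp₀ hp ?_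
    convert (h.comp_measurePreserving (measurePreserving_add_right volume 1)).sub h using 1
    funext u
    simp only [Function.comp, Pi.sub_apply, Complex.ofReal_add, Complex.ofReal_one]
    ring
  subst hc₂
  exact ⟨eq_zero_of_memLp_const hp₀ hp (by simpa using h), rfl⟩

end LpOnReal

theorem no_L2_solution_of_euler_equation (lam : ℂ) :
    (lam ≠ 1 / 4 → ∀ c₁ c₂ : ℂ,
      MemLp (fun t : ℝ =>
          c₁ * (t : ℂ) ^ (-1 / 2 + (1 / 4 - lam) ^ ((1 : ℂ) / 2)) +
          c₂ * (t : ℂ) ^ (-1 / 2 - (1 / 4 - lam) ^ ((1 : ℂ) / 2))) 2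
        (volume.restrict (Set.Ioi (0 : ℝ))) →
      c₁ = 0 ∧ c₂ = 0) ∧
    (lam = 1 / 4 → ∀ c₁ c₂ : ℂ,
      MemLp (fun t : ℝ =>
          c₁ * (t : ℂ) ^ (-(1 : ℂ) / 2) +
          c₂ * (t : ℂ) ^ (-(1 : ℂ) / 2) * (Real.log t : ℂ)) 2
        (volume.restrict (Set.Ioi (0 : ℝ))) →
      c₁ = 0 ∧ c₂ = 0) := by
  refine ⟨fun hlam c₁ c₂ h ↦ ?_, fun _ c₁ c₂ h ↦ ?_⟩
  · set s := (1 / 4 - lam) ^ ((1 : ℂ) / 2)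
    have hs : s ≠ 0 := Complex.cpow_ne_zero_iff.2 (Or.inl (sub_ne_zero.2 hlam.symm))
    refine eq_zero_of_memLp_cexp_add_cexp two_ne_zero ENNReal.ofNat_ne_top
      (s₁ := s) (s₂ := -s) (self_ne_neg.2 hs)
      (h.exp_half_smul_comp_exp (by fun_prop) fun u ↦ ?_)
    simp only [smul_add, ← mul_smul_comm, exp_half_smul_cpow_exp]
    ring_nf
  · refine eq_zero_of_memLp_const_add_mul two_ne_zero ENNReal.ofNat_ne_top
      (h.exp_half_smul_comp_exp (by fun_prop) fun u ↦ ?_)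
    simp only [Real.log_exp, smul_add, mul_right_comm _ _ (u : ℂ), ← mul_smul_comm,
      exp_half_smul_cpow_exp]
    norm_num
end
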